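/- Let f: ℝ^d → ℝ and g: ℝ^d → ℝ^d be smooth, and let α be a multi-index with |α| = k ≥ 1. Then |∂^α(f ∘ g)(x)| ≤ C ( Σ_{i=1}^d |(∂_i f)(g(x))| · |∂^α g^i(x)| + Σ_{2 ≤ |α'| ≤ k} |(∂^{α'} f)(g(x))| · Σ_{1 ≤ |β| ≤ k-1} |∂^β g(x)|^{k/|β|} ), for a constant C depending only on k and d. -/

import Mathlib

open Real
open scoped BigOperators

/-- Iterated partial derivative `∂^α f` along coordinate directions given by the
multi-index `α : Fin k → Fin d`. -/
noncomputable def pd {d : ℕ} (k : ℕ) (α : Fin k → Fin d)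
    (f : EuclideanSpace ℝ (Fin d) → ℝ) (x : EuclideanSpace ℝ (Fin d)) : ℝ :=
  iteratedFDeriv ℝ k f x (fun i => EuclideanSpace.single (α i) 1)

/-- Euclidean norm of the vector `∂^β g(x)` of iterated partial derivatives of the
components of a vector-valued function `g`. -/
noncomputable def vpd {d : ℕ} (k : ℕ) (β : Fin k → Fin d)
    (g : EuclideanSpace ℝ (Fin d) → EuclideanSpace ℝ (Fin d))
    (x : EuclideanSpace ℝ (Fin d)) : ℝ :=
  ‖(EuclideanSpace.equiv (Fin d) ℝ).symm (fun i => pd k β (fun y => g y i) x)‖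

/-! By Faà di Bruno's formula, `∂^α (f ∘ g)(x)` is a sum over the ordered partitions of the `k`
directions of `α` into blocks, the term of a partition with `l` blocks being `∂^l f (g x)` applied
to the derivatives of `g` along the blocks. The partition with a single block gives the
first-order sum. For `l ≥ 2` blocks every block size `kₘ` lies in `[1, k - 1]`, and since
`∑ kₘ = k`, weighted AM-GM bounds `∏ₘ |∂^{βₘ} g|` by `∑ₘ |∂^{βₘ} g| ^ (k / kₘ)`. -/

open Finset

namespace ContinuousMultilinearMap

variable {ι κ : Type*} [Fintype ι] [DecidableEq ι] [Fintype κ] [DecidableEq κ]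

theorem apply_eq_sum_single {F : Type*} [NormedAddCommGroup F] [NormedSpace ℝ F]
    (Q : ContinuousMultilinearMap ℝ (fun _ : κ => EuclideanSpace ℝ ι) F)
    (w : κ → EuclideanSpace ℝ ι) :
    Q w = ∑ γ : κ → ι, (∏ m, w m (γ m)) • Q (fun m => EuclideanSpace.single (γ m) 1) := by
  have hw : w = fun m => ∑ j, w m j • EuclideanSpace.single j (1 : ℝ) := by
    funext m
    simpa using ((EuclideanSpace.basisFun ι ℝ).sum_repr (w m)).symm
  conv_lhs => rw [hw, Q.map_sum]
  exact sum_congr rfl fun γ _ => Q.map_smul_univ _ _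

theorem abs_apply_le_sum_single
    (Q : ContinuousMultilinearMap ℝ (fun _ : κ => EuclideanSpace ℝ ι) ℝ)
    (w : κ → EuclideanSpace ℝ ι) :
    |Q w| ≤ ∑ γ : κ → ι, (∏ m, |w m (γ m)|) * |Q (fun m => EuclideanSpace.single (γ m) 1)| := by
  rw [Q.apply_eq_sum_single]
  refine (abs_sum_le_sum_abs _ _).trans_eq (sum_congr rfl fun γ _ => ?_)
  rw [smul_eq_mul, abs_mul, abs_prod]

end ContinuousMultilinearMap

theorem iteratedFDeriv_apply_coord {E ι : Type*} [NormedAddCommGroup E] [NormedSpace ℝ E]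
    [Fintype ι] {n : WithTop ℕ∞} {g : E → EuclideanSpace ℝ ι} (hg : ContDiff ℝ n g) {s : ℕ}
    (hs : s ≤ n) (x : E) (u : Fin s → E) (i : ι) :
    iteratedFDeriv ℝ s g x u i = iteratedFDeriv ℝ s (fun y => g y i) x u := by
  change _ = iteratedFDeriv ℝ s (EuclideanSpace.proj i ∘ g) x u
  rw [(EuclideanSpace.proj i).iteratedFDeriv_comp_left hg.contDiffAt hs]
  rfl

theorem Fin.exists_eq_cast_of_strictMono_of_surjective {p n : ℕ} {e : Fin p → Fin n}
    (he : StrictMono e) (hs : Function.Surjective e) : ∃ h : p = n, e = Fin.cast h := by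
  obtain rfl : p = n := by
    simpa using (Fintype.card_le_of_injective e he.injective).antisymm
      (Fintype.card_le_of_surjective e hs)
  refine ⟨rfl, funext fun j => Fin.ext ?_⟩
  simpa using Fin.coe_orderIso_apply (he.orderIsoOfSurjective e hs) j

theorem Real.prod_le_sum_rpow {ι : Type*} [Fintype ι] {a : ι → ℝ} (ha : ∀ i, 0 ≤ a i)
    {n : ι → ℕ} (hn : ∀ i, 0 < n i) {k : ℕ} (hk : 0 < k) (hsum : ∑ i, n i = k) :
    ∏ i, a i ≤ ∑ i, a i ^ ((k : ℝ) / n i) := by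
  have hk' : (0 : ℝ) < k := by exact_mod_cast hk
  have hweights : ∑ i, ((n i : ℝ) / k) = 1 := by
    rw [← sum_div, ← Nat.cast_sum, hsum, div_self hk'.ne']
  have hprod : ∏ i, (a i ^ ((k : ℝ) / n i)) ^ ((n i : ℝ) / k) = ∏ i, a i := by
    refine prod_congr rfl fun i _ => ?_
    have : (n i : ℝ) ≠ 0 := by exact_mod_cast (hn i).ne'
    rw [← Real.rpow_mul (ha i), div_mul_div_cancel₀ this, div_self hk'.ne', Real.rpow_one]
  calc ∏ i, a i
      ≤ ∑ i, (n i : ℝ) / k * a i ^ ((k : ℝ) / n i) := by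
        rw [← hprod]
        exact Real.geom_mean_le_arith_mean_weighted univ _ _ (fun i _ => by positivity) hweights
          (fun i _ => Real.rpow_nonneg (ha i) _)
    _ ≤ ∑ i, a i ^ ((k : ℝ) / n i) := by
        refine sum_le_sum fun i _ => mul_le_of_le_one_left (Real.rpow_nonneg (ha i) _) ?_
        rw [div_le_one hk']
        exact_mod_cast hsum ▸ single_le_sum (fun j _ => (n j).zero_le) (mem_univ i)

namespace OrderedFinpartition

variable {n : ℕ} (c : OrderedFinpartition n)

theorem sum_partSize : ∑ m, c.partSize m = n := by
  simpa using c.sum_sigma_eq_sum (fun _ => (1 : ℕ))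

theorem partSize_lt_of_two_le_length (hc : 2 ≤ c.length) (m : Fin c.length) :
    c.partSize m < n := by
  obtain ⟨m', hm'⟩ : ∃ m', m' ≠ m :=
    Fintype.exists_ne_of_one_lt_card (by rw [Fintype.card_fin]; omega) m
  have hsplit := c.sum_partSize
  rw [← add_sum_erase _ _ (mem_univ m')] at hsplit
  have hm_le : c.partSize m ≤ ∑ j ∈ univ.erase m', c.partSize j :=
    single_le_sum (fun j _ => (c.partSize j).zero_le) (mem_erase.mpr ⟨hm'.symm, mem_univ m⟩)
  have hm'_pos := c.partSize_pos m'
  omega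

theorem emb_surjective_of_length_eq_one (hc : c.length = 1) (m : Fin c.length) :
    Function.Surjective (c.emb m) := by
  intro j
  obtain ⟨m', hj⟩ := c.cover j
  obtain rfl : m' = m := Fin.ext (by omega)
  exact hj

end OrderedFinpartition

section ChainRule

variable {d k : ℕ}

theorem abs_pd_coord_le_vpd (l : ℕ) (β : Fin l → Fin d)
    (g : EuclideanSpace ℝ (Fin d) → EuclideanSpace ℝ (Fin d)) (x : EuclideanSpace ℝ (Fin d))
    (i : Fin d) : |pd l β (fun y => g y i) x| ≤ vpd l β g x :=
  PiLp.norm_apply_le ((EuclideanSpace.equiv (Fin d) ℝ).symm fun i => pd l β (fun y => g y i) x) i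

theorem pd_comp_of_strictMono_of_surjective {p : ℕ} {e : Fin p → Fin k} (he : StrictMono e)
    (hs : Function.Surjective e) (α : Fin k → Fin d) (h : EuclideanSpace ℝ (Fin d) → ℝ)
    (x : EuclideanSpace ℝ (Fin d)) : pd p (α ∘ e) h x = pd k α h x := by
  obtain ⟨rfl, rfl⟩ := Fin.exists_eq_cast_of_strictMono_of_surjective he hs
  rfl

noncomputable def faaDiBrunoTerm (f : EuclideanSpace ℝ (Fin d) → ℝ)
    (g : EuclideanSpace ℝ (Fin d) → EuclideanSpace ℝ (Fin d)) (α : Fin k → Fin d)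
    (x : EuclideanSpace ℝ (Fin d)) (c : OrderedFinpartition k) : ℝ :=
  iteratedFDeriv ℝ c.length f (g x) fun m =>
    iteratedFDeriv ℝ (c.partSize m) g x fun j => EuclideanSpace.single (α (c.emb m j)) 1

theorem pd_comp_eq_sum_faaDiBrunoTerm {f : EuclideanSpace ℝ (Fin d) → ℝ}
    {g : EuclideanSpace ℝ (Fin d) → EuclideanSpace ℝ (Fin d)} (hf : ContDiff ℝ k f)
    (hg : ContDiff ℝ k g) (α : Fin k → Fin d) (x : EuclideanSpace ℝ (Fin d)) :
    pd k α (fun y => f (g y)) x = ∑ c, faaDiBrunoTerm f g α x c := by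
  change iteratedFDeriv ℝ k (f ∘ g) x _ = _
  rw [iteratedFDeriv_comp hf.contDiffAt hg.contDiffAt le_rfl,
    FormalMultilinearSeries.taylorComp, _root_.sum_apply]
  rfl

theorem faaDiBrunoTerm_coord {g : EuclideanSpace ℝ (Fin d) → EuclideanSpace ℝ (Fin d)}
    (hg : ContDiff ℝ k g) (α : Fin k → Fin d) (x : EuclideanSpace ℝ (Fin d))
    (c : OrderedFinpartition k) (m : Fin c.length) (i : Fin d) :
    iteratedFDeriv ℝ (c.partSize m) g x (fun j => EuclideanSpace.single (α (c.emb m j)) 1) i =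
      pd (c.partSize m) (α ∘ c.emb m) (fun y => g y i) x :=
  iteratedFDeriv_apply_coord hg (by exact_mod_cast c.partSize_le m) x _ i

noncomputable def firstOrderSum (f : EuclideanSpace ℝ (Fin d) → ℝ)
    (g : EuclideanSpace ℝ (Fin d) → EuclideanSpace ℝ (Fin d)) (α : Fin k → Fin d)
    (x : EuclideanSpace ℝ (Fin d)) : ℝ :=
  ∑ i : Fin d, |pd 1 (fun _ => i) f (g x)| * |pd k α (fun y => g y i) x|

noncomputable def higherDerivSum (k : ℕ) (f : EuclideanSpace ℝ (Fin d) → ℝ)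
    (y : EuclideanSpace ℝ (Fin d)) : ℝ :=
  ∑ l ∈ Icc 2 k, ∑ α' : Fin l → Fin d, |pd l α' f y|

noncomputable def lowerDerivPowerSum (k : ℕ)
    (g : EuclideanSpace ℝ (Fin d) → EuclideanSpace ℝ (Fin d)) (x : EuclideanSpace ℝ (Fin d)) :
    ℝ :=
  ∑ l ∈ Icc 1 (k - 1), ∑ b : Fin l → Fin d, vpd l b g x ^ ((k : ℝ) / l)

variable {f : EuclideanSpace ℝ (Fin d) → ℝ}
  {g : EuclideanSpace ℝ (Fin d) → EuclideanSpace ℝ (Fin d)}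

theorem firstOrderSum_nonneg (α : Fin k → Fin d) (x : EuclideanSpace ℝ (Fin d)) :
    0 ≤ firstOrderSum f g α x :=
  sum_nonneg fun _ _ => mul_nonneg (abs_nonneg _) (abs_nonneg _)

theorem higherDerivSum_nonneg (y : EuclideanSpace ℝ (Fin d)) : 0 ≤ higherDerivSum k f y :=
  sum_nonneg fun _ _ => sum_nonneg fun _ _ => abs_nonneg _

theorem lowerDerivPowerSum_nonneg (x : EuclideanSpace ℝ (Fin d)) :
    0 ≤ lowerDerivPowerSum k g x :=
  sum_nonneg fun _ _ => sum_nonneg fun _ _ => Real.rpow_nonneg (norm_nonneg _) _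

theorem abs_faaDiBrunoTerm_le_of_length_eq_one (hg : ContDiff ℝ k g) (α : Fin k → Fin d)
    (x : EuclideanSpace ℝ (Fin d)) (c : OrderedFinpartition k) (hc : c.length = 1) :
    |faaDiBrunoTerm f g α x c| ≤ firstOrderSum f g α x := by
  have hblock : ∀ m i, iteratedFDeriv ℝ (c.partSize m) g x
      (fun j => EuclideanSpace.single (α (c.emb m j)) 1) i = pd k α (fun y => g y i) x :=
    fun m i => by
      rw [faaDiBrunoTerm_coord hg]
      exact pd_comp_of_strictMono_of_surjective (c.emb_strictMono m)
        (c.emb_surjective_of_length_eq_one hc m) _ _ _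
  refine (ContinuousMultilinearMap.abs_apply_le_sum_single _ _).trans_eq ?_
  simp only [hblock]
  change ∑ γ : Fin c.length → Fin d,
    (∏ m, |pd k α (fun y => g y (γ m)) x|) * |pd c.length γ f (g x)| = _
  generalize c.length = L at hc ⊢
  subst hc
  refine (Fintype.sum_equiv (Equiv.funUnique (Fin 1) (Fin d)).symm _ _ fun i => ?_).symm
  rw [Fintype.prod_subsingleton _ 0, mul_comm]
  rfl

theorem abs_faaDiBrunoTerm_le_of_two_le_length (hk : 0 < k) (hg : ContDiff ℝ k g)
    (α : Fin k → Fin d) (x : EuclideanSpace ℝ (Fin d)) (c : OrderedFinpartition k)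
    (hc : 2 ≤ c.length) :
    |faaDiBrunoTerm f g α x c| ≤ k * (higherDerivSum k f (g x) * lowerDerivPowerSum k g x) := by
  set a : Fin c.length → ℝ := fun m => vpd (c.partSize m) (α ∘ c.emb m) g x
  have ha : ∀ m, 0 ≤ a m := fun m => norm_nonneg _
  have hblock : ∀ m i, |iteratedFDeriv ℝ (c.partSize m) g x
      (fun j => EuclideanSpace.single (α (c.emb m j)) 1) i| ≤ a m := fun m i => by
    rw [faaDiBrunoTerm_coord hg]
    exact abs_pd_coord_le_vpd _ _ _ _ _
  have hpow : ∀ m, a m ^ ((k : ℝ) / c.partSize m) ≤ lowerDerivPowerSum k g x := fun m => by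
    have hm : c.partSize m ∈ Icc 1 (k - 1) :=
      mem_Icc.mpr ⟨c.partSize_pos m, Nat.le_sub_one_of_lt (c.partSize_lt_of_two_le_length hc m)⟩
    refine le_trans ?_ (single_le_sum (fun l _ => sum_nonneg fun b _ =>
      Real.rpow_nonneg (norm_nonneg _) _) hm)
    exact single_le_sum (f := fun b => vpd (c.partSize m) b g x ^ ((k : ℝ) / c.partSize m))
      (fun b _ => Real.rpow_nonneg (norm_nonneg _) _) (mem_univ _)
  have hprod : ∏ m, a m ≤ k * lowerDerivPowerSum k g x :=
    calc ∏ m, a m ≤ ∑ m, a m ^ ((k : ℝ) / c.partSize m) :=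
          Real.prod_le_sum_rpow ha c.partSize_pos hk c.sum_partSize
      _ ≤ ∑ _m : Fin c.length, lowerDerivPowerSum k g x := sum_le_sum fun m _ => hpow m
      _ = c.length * lowerDerivPowerSum k g x := by simp
      _ ≤ k * lowerDerivPowerSum k g x := by
          gcongr
          · exact lowerDerivPowerSum_nonneg x
          · exact c.length_le
  have hsum : ∑ γ : Fin c.length → Fin d, |pd c.length γ f (g x)| ≤ higherDerivSum k f (g x) :=
    single_le_sum (f := fun l => ∑ γ : Fin l → Fin d, |pd l γ f (g x)|)
      (fun l _ => sum_nonneg fun _ _ => abs_nonneg _) (mem_Icc.mpr ⟨hc, c.length_le⟩)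
  calc |faaDiBrunoTerm f g α x c|
      ≤ ∑ γ : Fin c.length → Fin d, (∏ m, a m) * |pd c.length γ f (g x)| := by
        refine (ContinuousMultilinearMap.abs_apply_le_sum_single _ _).trans
          (sum_le_sum fun γ _ => ?_)
        exact mul_le_mul_of_nonneg_right
          (prod_le_prod (fun _ _ => abs_nonneg _) fun m _ => hblock m (γ m)) (abs_nonneg _)
    _ = (∏ m, a m) * ∑ γ : Fin c.length → Fin d, |pd c.length γ f (g x)| := (mul_sum ..).symm
    _ ≤ (k * lowerDerivPowerSum k g x) * higherDerivSum k f (g x) :=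
        mul_le_mul hprod hsum (sum_nonneg fun _ _ => abs_nonneg _)
          (mul_nonneg k.cast_nonneg (lowerDerivPowerSum_nonneg x))
    _ = k * (higherDerivSum k f (g x) * lowerDerivPowerSum k g x) := by ring

theorem abs_faaDiBrunoTerm_le (hk : 0 < k) (hg : ContDiff ℝ k g) (α : Fin k → Fin d)
    (x : EuclideanSpace ℝ (Fin d)) (c : OrderedFinpartition k) :
    |faaDiBrunoTerm f g α x c| ≤
      firstOrderSum f g α x + k * (higherDerivSum k f (g x) * lowerDerivPowerSum k g x) := by
  have hS1 := firstOrderSum_nonneg (f := f) (g := g) α x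
  have hS23 : 0 ≤ k * (higherDerivSum k f (g x) * lowerDerivPowerSum k g x) :=
    mul_nonneg k.cast_nonneg (mul_nonneg (higherDerivSum_nonneg _) (lowerDerivPowerSum_nonneg _))
  rcases (Nat.succ_le_of_lt (c.length_pos hk)).eq_or_lt' with hc | hc
  · exact (abs_faaDiBrunoTerm_le_of_length_eq_one hg α x c hc).trans (le_add_of_nonneg_right hS23)
  · exact (abs_faaDiBrunoTerm_le_of_two_le_length hk hg α x c hc).trans (le_add_of_nonneg_left hS1)

theorem abs_pd_comp_le (hk : 0 < k) (hf : ContDiff ℝ k f) (hg : ContDiff ℝ k g)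
    (α : Fin k → Fin d) (x : EuclideanSpace ℝ (Fin d)) :
    |pd k α (fun y => f (g y)) x| ≤ Fintype.card (OrderedFinpartition k) * (k + 1) *
      (firstOrderSum f g α x + higherDerivSum k f (g x) * lowerDerivPowerSum k g x) := by
  have hS1 := firstOrderSum_nonneg (f := f) (g := g) α x
  have hS23 : 0 ≤ higherDerivSum k f (g x) * lowerDerivPowerSum k g x :=
    mul_nonneg (higherDerivSum_nonneg _) (lowerDerivPowerSum_nonneg _)
  rw [pd_comp_eq_sum_faaDiBrunoTerm hf hg, mul_assoc]
  calc |∑ c, faaDiBrunoTerm f g α x c|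
      ≤ ∑ c, |faaDiBrunoTerm f g α x c| := abs_sum_le_sum_abs _ _
    _ ≤ ∑ _c : OrderedFinpartition k,
          (firstOrderSum f g α x + k * (higherDerivSum k f (g x) * lowerDerivPowerSum k g x)) :=
        sum_le_sum fun c _ => abs_faaDiBrunoTerm_le hk hg α x c
    _ = Fintype.card (OrderedFinpartition k) *
          (firstOrderSum f g α x + k * (higherDerivSum k f (g x) * lowerDerivPowerSum k g x)) := by
        rw [sum_const, card_univ, nsmul_eq_mul]
    _ ≤ _ := by
        gcongr
        nlinarith

end ChainRule

theorem stmt2_general (d k : ℕ) (hk : 1 ≤ k) :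
    ∃ C : ℝ, 0 < C ∧
      ∀ (f : EuclideanSpace ℝ (Fin d) → ℝ)
        (g : EuclideanSpace ℝ (Fin d) → EuclideanSpace ℝ (Fin d)),
      ContDiff ℝ k f → ContDiff ℝ k g →
      ∀ (α : Fin k → Fin d) (x : EuclideanSpace ℝ (Fin d)),
      |pd k α (fun y => f (g y)) x| ≤
        C * ((∑ i : Fin d, |pd 1 (fun _ => i) f (g x)| * |pd k α (fun y => g y i) x|)
          + (∑ l ∈ Finset.Icc 2 k, ∑ α' : Fin l → Fin d, |pd l α' f (g x)|) *
            ∑ l ∈ Finset.Icc 1 (k - 1), ∑ b : Fin l → Fin d,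
              vpd l b g x ^ ((k : ℝ) / (l : ℝ))) :=
  ⟨Fintype.card (OrderedFinpartition k) * (k + 1), by positivity,
    fun _ _ hf hg α x => abs_pd_comp_le hk hf hg α x⟩

/-- Faà di Bruno-type chain-rule estimate:
`|∂^α (f ∘ g)(x)| ≤ C (Σ_i |∂_i f(g(x))| |∂^α g^i(x)|
  + Σ_{2 ≤ |α'| ≤ k} |∂^{α'} f(g(x))| · Σ_{1 ≤ |β| ≤ k-1} |∂^β g(x)|^{k/|β|})`
with `C` depending only on `k` and `d`. -/
theorem stmt2 (d k : ℕ) (hd : 0 < d) (hk : 1 ≤ k) :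
    ∃ C : ℝ, 0 < C ∧
      ∀ (f : EuclideanSpace ℝ (Fin d) → ℝ)
        (g : EuclideanSpace ℝ (Fin d) → EuclideanSpace ℝ (Fin d)),
      ContDiff ℝ k f → ContDiff ℝ k g →
      ∀ (α : Fin k → Fin d) (x : EuclideanSpace ℝ (Fin d)),
      |pd k α (fun y => f (g y)) x| ≤
        C * ((∑ i : Fin d, |pd 1 (fun _ => i) f (g x)| * |pd k α (fun y => g y i) x|)
          + (∑ l ∈ Finset.Icc 2 k, ∑ α' : Fin l → Fin d, |pd l α' f (g x)|) *
            ∑ l ∈ Finset.Icc 1 (k - 1), ∑ b : Fin l → Fin d,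
              vpd l b g x ^ ((k : ℝ) / (l : ℝ))) :=
  stmt2_general d k hk
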